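/- arXiv:2507.03264 — 3 statements merged into one kernel-verified Lean document; each statement's English description precedes it below -/
import Mathlib

section
/- For any graph G, any edge uv of G, and any positive integer k, the Ramsey number satisfies r(G, K_{1,k}) ≤ r(G − uv, K_{1,k}) + k, where G − uv denotes G with the edge uv removed. -/
open SimpleGraph Finset

/-- `F.ContainsCopy G` : the graph `F` contains a copy of `G` as a subgraph,
i.e. there is an injective map preserving adjacency. -/
def SimpleGraph.ContainsCopy {V W : Type*} (F : SimpleGraph V) (G : SimpleGraph W) : Prop :=
  ∃ f : W ↪ V, ∀ ⦃a b : W⦄, G.Adj a b → F.Adj (f a) (f b)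

/-- The Ramsey number `r(G,H)` : the least positive `N` such that in every red/blue
edge-colouring of `K_N` (the red graph being `R`, the blue graph `Rᶜ`) there is a
red copy of `G` or a blue copy of `H`. -/
noncomputable def ramseyNumber {V W : Type*} (G : SimpleGraph V) (H : SimpleGraph W) : ℕ :=
  sInf {N | 0 < N ∧ ∀ R : SimpleGraph (Fin N), R.ContainsCopy G ∨ Rᶜ.ContainsCopy H}

/-- The star `K_{1,k}`. -/
def starGraph (k : ℕ) : SimpleGraph (Fin 1 ⊕ Fin k) := completeBipartiteGraph (Fin 1) (Fin k)

/-- The independence number `α(G)`. -/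
noncomputable def indepNum {V : Type*} (G : SimpleGraph V) : ℕ :=
  sSup {m | ∃ s : Set V, (s.Pairwise fun a b => ¬ G.Adj a b) ∧ s.ncard = m}

/-- The vertex set of `G_v = G - N[v]` : the complement of the closed neighbourhood. -/
def SimpleGraph.delNbhd {V : Type*} (G : SimpleGraph V) (v : V) : Set V :=
  {w | w ≠ v ∧ ¬ G.Adj v w}

/-- `α'(G) = min over vertices v of α(G - N[v])`. -/
noncomputable def alphaPrime {V : Type*} (G : SimpleGraph V) : ℕ :=
  sInf {m | ∃ v : V, m = _root_.indepNum (G.induce (G.delNbhd v))}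

/-- `t` disjoint copies of the graph `G`. -/
def nCopies {V : Type*} (t : ℕ) (G : SimpleGraph V) : SimpleGraph (Fin t × V) where
  Adj a b := a.1 = b.1 ∧ G.Adj a.2 b.2
  symm := ⟨fun a b h => ⟨h.1.symm, h.2.symm⟩⟩
  loopless := ⟨fun a h => G.loopless.irrefl a.2 h.2⟩

/-!
If some vertex of a colouring of `K_{r+k}` has `k` blue neighbours there is a blue `K_{1,k}`.
Otherwise a vertex `x` has at least `r = r(G - uv, K_{1,k})` red neighbours; among them there is
a blue `K_{1,k}` or a red copy of `G - uv`, and in the latter case sending `u` to `x` instead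
yields a red copy of `G`, since `x` is red-adjacent to all of them and every edge of `G` not
covered by that copy is incident to `u`. The same step, applied vertex by vertex starting from
the empty graph, shows that these Ramsey numbers exist.
-/

section

variable {V W β : Type*}

lemma SimpleGraph.containsCopy_iff_isContained {F : SimpleGraph V} {G : SimpleGraph W} :
    F.ContainsCopy G ↔ G ⊑ F :=
  isContained_iff_exists_le_comap.symm

/-- The arrow relation `N → (G, H)`. -/
def RamseyArrows (N : ℕ) (G : SimpleGraph V) (H : SimpleGraph W) : Prop :=
  ∀ R : SimpleGraph (Fin N), G ⊑ R ∨ H ⊑ Rᶜ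

lemma ramseyNumber_eq_sInf (G : SimpleGraph V) (H : SimpleGraph W) :
    ramseyNumber G H = sInf {N | 0 < N ∧ RamseyArrows N G H} := by
  simp only [ramseyNumber, RamseyArrows, containsCopy_iff_isContained]

lemma RamseyArrows.isContained_or_isContained_compl {N : ℕ} {G : SimpleGraph V}
    {H : SimpleGraph W} [Fintype β] (h : RamseyArrows N G H) (hN : N ≤ Fintype.card β)
    (R : SimpleGraph β) : G ⊑ R ∨ H ⊑ Rᶜ := by
  obtain ⟨j⟩ : Nonempty (Fin N ↪ β) :=
    Function.Embedding.nonempty_of_card_le (by simpa using hN)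
  have hR : R.comap j ⊴ R := (Embedding.comap j R).isIndContained
  exact (h (R.comap j)).imp (·.trans hR.isContained) (·.trans hR.compl.isContained)

lemma starGraph_isContained_of_le_degree {R : SimpleGraph β} {k : ℕ} (x : β)
    [Fintype (R.neighborSet x)] (h : k ≤ R.degree x) : _root_.starGraph k ⊑ R := by
  obtain ⟨t, ht, hcard⟩ := exists_subset_card_eq h
  rw [_root_.starGraph, completeBipartiteGraph_isContained_iff]
  refine ⟨{x}, t, by simp, by simpa using hcard, ?_⟩
  intro a ha b hb
  rw [coe_singleton, Set.mem_singleton_iff] at ha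
  exact ha ▸ (mem_neighborFinset R x b).1 (ht hb)

lemma le_degree_or_le_degree_compl [Fintype β] [DecidableEq β] (R : SimpleGraph β)
    [DecidableRel R.Adj] {N k : ℕ} (hcard : Fintype.card β = N + k) (x : β) :
    N ≤ R.degree x ∨ k ≤ Rᶜ.degree x := by
  rw [degree_compl, hcard]
  omega

lemma isContained_of_deleteIncidenceSet_isContained_induce_neighborSet {G : SimpleGraph W}
    {R : SimpleGraph β} (u : W) (x : β)
    (h : G.deleteIncidenceSet u ⊑ R.induce (R.neighborSet x)) : G ⊑ R := by
  classical
  obtain ⟨f⟩ := h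
  have hx (w : W) : R.Adj x (f w) := (f w).2
  have hne (w : W) : (f w : β) ≠ x := (hx w).ne'
  let g : W → β := fun w => if w = u then x else f w
  have hg ⦃a b : W⦄ (hab : G.Adj a b) : R.Adj (g a) (g b) := by
    by_cases ha : a = u <;> by_cases hb : b = u <;> simp only [g, ha, hb, if_true, if_false]
    · exact absurd (ha.trans hb.symm) hab.ne
    · exact hx b
    · exact (hx a).symm
    · exact f.toHom.map_adj (deleteIncidenceSet_adj.2 ⟨hab, ha, hb⟩)
  have hg_inj : Function.Injective g := fun a b hab => by
    by_cases ha : a = u <;> by_cases hb : b = u <;> simp only [g, ha, hb, if_true, if_false] at hab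
    · exact ha.trans hb.symm
    · exact absurd hab.symm (hne b)
    · exact absurd hab (hne a)
    · exact f.injective (Subtype.ext hab)
  exact ⟨⟨⟨g, fun hab => hg hab⟩, hg_inj⟩⟩

lemma RamseyArrows.of_deleteIncidenceSet_le {N k : ℕ} {G H : SimpleGraph W} (u : W)
    (hGH : G.deleteIncidenceSet u ≤ H) (h : RamseyArrows N H (_root_.starGraph k)) :
    RamseyArrows (N + k) G (_root_.starGraph k) := by
  classical
  intro R
  obtain ⟨x⟩ : Nonempty (Fin (N + k)) := by
    rcases h ⊥ with ⟨⟨f⟩⟩ | ⟨⟨f⟩⟩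
    exacts [⟨Fin.castAdd k (f u)⟩, ⟨Fin.castAdd k (f (.inl 0))⟩]
  rcases le_degree_or_le_degree_compl R (Fintype.card_fin _) x with hred | hblue
  · rw [← card_neighborSet_eq_degree] at hred
    rcases h.isContained_or_isContained_compl hred (R.induce (R.neighborSet x)) with hH | hstar
    · exact .inl (isContained_of_deleteIncidenceSet_isContained_induce_neighborSet u x
        ((IsContained.of_le hGH).trans hH))
    · exact .inr (hstar.trans (Embedding.induce _).isIndContained.compl.isContained)
  · exact .inr (starGraph_isContained_of_le_degree x hblue)

lemma ramseyArrows_starGraph_of_forall_adj_mem [Fintype W] {N : ℕ}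
    (hN : Fintype.card W ≤ N) (k : ℕ) (S : Finset W) {G : SimpleGraph W}
    (hS : ∀ a b, G.Adj a b → a ∈ S ∨ b ∈ S) :
    RamseyArrows (N + k * #S) G (_root_.starGraph k) := by
  classical
  induction S using Finset.induction_on generalizing G with
  | empty =>
    have hG : G ≤ ⊥ := fun a b hab => by simpa using hS a b hab
    exact fun R => .inl (.mono_left hG (bot_isContained_iff_card_le.2 (by simpa using hN)))
  | insert u S hu ih =>
    rw [card_insert_of_notMem hu, mul_add_one, ← add_assoc]
    refine (ih fun a b hab => ?_).of_deleteIncidenceSet_le u le_rfl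
    obtain ⟨hab, ha, hb⟩ := deleteIncidenceSet_adj.1 hab
    simpa [ha, hb] using hS a b hab

lemma ramseyNumber_starGraph_spec [Fintype W] (G : SimpleGraph W) (k : ℕ) :
    0 < ramseyNumber G (_root_.starGraph k) ∧
      RamseyArrows (ramseyNumber G (_root_.starGraph k)) G (_root_.starGraph k) := by
  rw [ramseyNumber_eq_sInf]
  exact Nat.sInf_mem (s := {N | 0 < N ∧ RamseyArrows N G (_root_.starGraph k)})
    ⟨Fintype.card W + 1 + k * #univ, by omega,
      ramseyArrows_starGraph_of_forall_adj_mem (Nat.le_succ _) k univ (by simp)⟩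

end

theorem stmt1_general {V : Type*} [Fintype V] (G : SimpleGraph V) (u v : V) (k : ℕ) :
    ramseyNumber G (_root_.starGraph k) ≤
      ramseyNumber (G.deleteEdges {s(u, v)}) (_root_.starGraph k) + k := by
  obtain ⟨hpos, harrows⟩ := ramseyNumber_starGraph_spec (G.deleteEdges {s(u, v)}) k
  have hle : G.deleteIncidenceSet u ≤ G.deleteEdges {s(u, v)} := fun a b hab => by
    obtain ⟨hab, ha, hb⟩ := deleteIncidenceSet_adj.1 hab
    simp [hab, ha, hb]
  rw [ramseyNumber_eq_sInf]
  exact Nat.sInf_le ⟨by omega, harrows.of_deleteIncidenceSet_le u hle⟩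

/-- `r(G, K_{1,k}) ≤ r(G - uv, K_{1,k}) + k`. -/
theorem stmt1 {V : Type*} [Fintype V] (G : SimpleGraph V) (u v : V) (huv : G.Adj u v)
    (k : ℕ) (hk : 1 ≤ k) :
    ramseyNumber G (_root_.starGraph k) ≤
      ramseyNumber (G.deleteEdges {s(u, v)}) (_root_.starGraph k) + k :=
  stmt1_general G u v k
end

section
/- Let n and k be positive integers. If G is a connected graph with n vertices and at most n(1 + 1/(2k+1)) edges, then r(G, K_{1,k}) ≤ n + 2k − 2. -/
open SimpleGraph Finset

/-!
If some vertex has `k` blue neighbours there is a blue star. Otherwise every vertex has fewer than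
`k` blue neighbours, so a vertex of `G` with `d` already embedded neighbours can be added to a red
copy of `m` vertices as soon as `d (k - 1) + m < N`. Vertices of degree at most `2` are stripped
off and embedded last, in reverse order; each costs at most `2 (k - 1) + n - 1 < N`. What remains
is a subgraph `C` of minimum degree `3`; as `G` is connected, `e(G) ≥ n + |C| / 2`, so the edge
bound gives `k |C| ≤ n` and `C` embeds in any order.
-/

namespace SimpleGraph

variable {V W : Type*}

theorem containsCopy_starGraph_of_le_degree (H : SimpleGraph W) {x : W} {k : ℕ}
    [Fintype (H.neighborSet x)] (h : k ≤ H.degree x) : H.ContainsCopy (_root_.starGraph k) := by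
  obtain ⟨g⟩ : Nonempty (Fin k ↪ H.neighborSet x) :=
    Function.Embedding.nonempty_of_card_le (by rwa [Fintype.card_fin, card_neighborSet_eq_degree])
  refine ⟨⟨Sum.elim (fun _ => x) (fun i => (g i : W)), ?_⟩, ?_⟩
  · refine Function.Injective.sumElim (fun _ _ _ => Subsingleton.elim _ _)
      (Subtype.val_injective.comp g.injective) fun _ i => (H.ne_of_adj (g i).2)
  · rintro (_ | i) (_ | j) hij
    · simp [_root_.starGraph] at hij
    · exact (g j).2
    · exact ((g i).2 : H.Adj x _).symm
    · simp [_root_.starGraph] at hij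

theorem exists_forall_adj_notMem_of_card_lt [Fintype W] [DecidableEq W] (R : SimpleGraph W)
    [DecidableRel R.Adj] {c : ℕ} (hR : ∀ x, Rᶜ.degree x ≤ c) {T B : Finset W}
    (hBT : B ⊆ T)
    (h : #B * c + #T < Fintype.card W) : ∃ a ∉ T, ∀ b ∈ B, R.Adj b a := by
  have hcard : #(T ∪ B.biUnion (Rᶜ.neighborFinset ·)) < #(univ : Finset W) := by
    calc #(T ∪ B.biUnion (Rᶜ.neighborFinset ·))
        ≤ #T + ∑ b ∈ B, #(Rᶜ.neighborFinset b) :=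
          (card_union_le _ _).trans (by gcongr; exact card_biUnion_le)
      _ ≤ #T + #B * c := by
          gcongr
          simpa using sum_le_sum fun b _ => (card_neighborFinset_eq_degree Rᶜ b).trans_le (hR b)
      _ < #(univ : Finset W) := by rw [card_univ]; omega
  obtain ⟨a, -, ha⟩ := exists_mem_notMem_of_card_lt_card hcard
  simp only [mem_union, mem_biUnion, not_or, not_exists, not_and] at ha
  refine ⟨a, ha.1, fun b hb => ?_⟩
  have hne : b ≠ a := fun hba => ha.1 (hba ▸ hBT hb)
  simpa [hne] using ha.2 b hb

def IsCopyOn (G : SimpleGraph V) (R : SimpleGraph W) (f : V → W) (s : Finset V) : Prop :=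
  Set.InjOn f s ∧
    ∀ ⦃a⦄, a ∈ s → ∀ ⦃b⦄, b ∈ s → G.Adj a b → R.Adj (f a) (f b)

theorem IsCopyOn.containsCopy [Fintype V] {G : SimpleGraph V} {R : SimpleGraph W} {f : V → W}
    (hf : G.IsCopyOn R f univ) : R.ContainsCopy G :=
  ⟨⟨f, fun a b hab => hf.1 (mem_univ a) (mem_univ b) hab⟩,
    fun a b hab => hf.2 (mem_univ a) (mem_univ b) hab⟩

section Greedy

variable [Fintype V] [DecidableEq V] [Fintype W] [DecidableEq W]
  {G : SimpleGraph V} [DecidableRel G.Adj] {R : SimpleGraph W} [DecidableRel R.Adj] {c : ℕ}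

theorem IsCopyOn.exists_insert {f : V → W} {s : Finset V} {v : V} (hf : G.IsCopyOn R f s)
    (hR : ∀ x, Rᶜ.degree x ≤ c) (hv : v ∉ s)
    (h : #(G.neighborFinset v ∩ s) * c + #s < Fintype.card W) :
    ∃ g, G.IsCopyOn R g (insert v s) := by
  obtain ⟨a, haT, haB⟩ := exists_forall_adj_notMem_of_card_lt R hR
    (image_subset_image inter_subset_right : (G.neighborFinset v ∩ s).image f ⊆ s.image f)
    (by grw [card_image_le, card_image_le]; exact h)
  have heq : Set.EqOn (Function.update f v a) f s :=
    fun u hu => Function.update_of_ne (ne_of_mem_of_not_mem hu hv) a f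
  have hadj : ∀ u ∈ s, G.Adj v u → R.Adj (Function.update f v a u) a := fun u hu hvu => by
    rw [heq hu]
    exact haB _ (mem_image_of_mem f (mem_inter.2 ⟨(mem_neighborFinset _ _ _).2 hvu, hu⟩))
  refine ⟨Function.update f v a, ?_, ?_⟩
  · rw [coe_insert, Set.injOn_insert hv, heq.injOn_iff, Set.image_congr heq]
    simpa [Function.update_self] using
      ⟨hf.1, fun u hu hua => haT (hua ▸ mem_image_of_mem f hu)⟩
  · intro x hx y hy hxy
    rcases mem_insert.1 hx with rfl | hxs <;> rcases mem_insert.1 hy with rfl | hys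
    · exact absurd hxy (G.loopless.irrefl _)
    · simpa [Function.update_self] using (hadj y hys hxy).symm
    · simpa [Function.update_self] using hadj x hxs hxy.symm
    · rw [heq hxs, heq hys]; exact hf.2 hxs hys hxy

theorem exists_isCopyOn_of_card_mul_le [Nonempty W] (hR : ∀ x, Rᶜ.degree x ≤ c) (s : Finset V)
    (h : #s * (c + 1) ≤ Fintype.card W + c) : ∃ f, G.IsCopyOn R f s := by
  induction s using Finset.induction with
  | empty => exact ⟨fun _ => Classical.arbitrary W, by simp [IsCopyOn]⟩
  | insert v s hv ih =>
    rw [card_insert_of_notMem hv] at h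
    obtain ⟨f, hf⟩ := ih (by nlinarith)
    refine hf.exists_insert hR hv ?_
    calc #(G.neighborFinset v ∩ s) * c + #s ≤ #s * c + #s := by
          gcongr; exact inter_subset_right
      _ < Fintype.card W := by nlinarith

theorem exists_isCopyOn_of_small_cores [Nonempty W] (d : ℕ) (hR : ∀ x, Rᶜ.degree x ≤ c)
    (hV : Fintype.card V + d * c ≤ Fintype.card W)
    (hcore : ∀ s : Finset V, (∀ v ∈ s, d < #(G.neighborFinset v ∩ s)) →
      #s * (c + 1) ≤ Fintype.card W + c)
    (s : Finset V) : ∃ f, G.IsCopyOn R f s := by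
  induction s using Finset.strongInduction with
  | H s ih =>
    by_cases hlow : ∃ v ∈ s, #(G.neighborFinset v ∩ s) ≤ d
    · obtain ⟨v, hv, hdeg⟩ := hlow
      obtain ⟨f, hf⟩ := ih _ (erase_ssubset hv)
      rw [← insert_erase hv]
      refine hf.exists_insert hR (notMem_erase v s) ?_
      have hsmall : #(s.erase v) < Fintype.card V :=
        (card_lt_card (erase_ssubset hv)).trans_le (card_le_univ s)
      calc #(G.neighborFinset v ∩ s.erase v) * c + #(s.erase v) ≤ d * c + #(s.erase v) := by
            gcongr; exact (card_le_card (inter_subset_inter_left (erase_subset v s))).trans hdeg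
        _ < Fintype.card W := by omega
    · push Not at hlow
      exact exists_isCopyOn_of_card_mul_le hR s (hcore s hlow)

end Greedy

theorem Connected.exists_adj_inf'_dist_lt {G : SimpleGraph V} {s : Finset V} (hG : G.Connected)
    (hs : s.Nonempty) {v : V} (hv : v ∉ s) :
    ∃ w, G.Adj v w ∧ s.inf' hs (G.dist w) < s.inf' hs (G.dist v) := by
  obtain ⟨c, hc, hvc⟩ := exists_mem_eq_inf' hs (G.dist v)
  obtain ⟨p, hp⟩ := hG.exists_walk_length_eq_dist v c
  cases p with
  | nil => exact absurd hc hv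
  | cons hvw q =>
    refine ⟨_, hvw, ?_⟩
    calc s.inf' hs (G.dist _) ≤ G.dist _ c := inf'_le _ hc
      _ ≤ q.length := dist_le q
      _ < s.inf' hs (G.dist v) := by rw [hvc, ← hp, Walk.length_cons]; omega

section Core

variable [Fintype V] [DecidableEq V] {G : SimpleGraph V} [DecidableRel G.Adj] {s : Finset V}

theorem sum_card_neighborFinset_inter (G : SimpleGraph V) [DecidableRel G.Adj] (s : Finset V) :
    ∑ v ∈ s, #(G.neighborFinset v ∩ s) = 2 * #(G.edgeFinset ∩ s.sym2) := by
  have hedges := map_edgeFinset_induce (G := G) (s := (s : Set V))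
  rw [toFinset_coe] at hedges
  rw [← hedges, card_map, ← sum_degrees_eq_twice_card_edges, ← sum_coe_sort s]
  congr 1 with v
  · simp
  · rw [← card_neighborFinset_eq_degree, ← card_map (.subtype _), map_neighborFinset_induce,
      toFinset_coe]

theorem Connected.card_compl_le_card_edgeFinset_sdiff_sym2 (hG : G.Connected) (hs : s.Nonempty) :
    #sᶜ ≤ #(G.edgeFinset \ s.sym2) := by
  choose! w hadj hlt using fun v (hv : v ∉ s) => hG.exists_adj_inf'_dist_lt hs hv
  refine card_le_card_of_injOn (fun v => s(v, w v)) (fun v hv => ?_)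
    (fun v₁ hv₁ v₂ hv₂ h => ?_)
  · rw [mem_coe, mem_compl] at hv
    rw [mem_coe, mem_sdiff, mem_edgeFinset, mem_sym2_iff]
    exact ⟨hadj v hv, fun h => hv (h v (Sym2.mem_mk_left _ _))⟩
  · rw [mem_coe, mem_compl] at hv₁ hv₂
    rcases Sym2.eq_iff.1 h with ⟨h, -⟩ | ⟨h₁, h₂⟩
    · exact h
    · have h₁₂ := hlt v₁ hv₁
      have h₂₁ := hlt v₂ hv₂
      rw [h₂] at h₁₂
      rw [← h₁] at h₂₁
      omega

theorem Connected.card_add_two_mul_card_le (hG : G.Connected) (hs : s.Nonempty)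
    (hmin : ∀ v ∈ s, 2 < #(G.neighborFinset v ∩ s)) :
    #s + 2 * Fintype.card V ≤ 2 * #G.edgeFinset := by
  have hinside : 3 * #s ≤ 2 * #(G.edgeFinset ∩ s.sym2) := by
    rw [← sum_card_neighborFinset_inter, mul_comm, ← smul_eq_mul]
    exact card_nsmul_le_sum _ _ _ hmin
  have houtside := hG.card_compl_le_card_edgeFinset_sdiff_sym2 hs
  have hsplit := card_inter_add_card_sdiff G.edgeFinset s.sym2
  have hcompl := card_compl s
  have hs_le := card_le_univ s
  omega

theorem Connected.card_mul_le_of_card_edgeFinset_mul_le (hG : G.Connected) {k : ℕ}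
    (he : #G.edgeFinset * (2 * k + 1) ≤ Fintype.card V * (2 * k + 2))
    (hmin : ∀ v ∈ s, 2 < #(G.neighborFinset v ∩ s)) : #s * k ≤ Fintype.card V := by
  rcases s.eq_empty_or_nonempty with rfl | hs
  · simp
  have := Nat.mul_le_mul_right (2 * k + 1) (hG.card_add_two_mul_card_le hs hmin)
  nlinarith

end Core

end SimpleGraph

/-- a connected graph on `n` vertices with at most `n(1 + 1/(2k+1))` edges
satisfies `r(G, K_{1,k}) ≤ n + 2k - 2`. -/
theorem stmt4 {V : Type*} [Fintype V] (G : SimpleGraph V) (n k : ℕ) (hk : 1 ≤ k)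
    (hn : 1 ≤ n) (hcard : Fintype.card V = n) (hconn : G.Connected)
    (he : (G.edgeSet.ncard : ℚ) ≤ (n : ℚ) * (1 + 1 / (2 * (k : ℚ) + 1))) :
    ramseyNumber G (_root_.starGraph k) ≤ n + 2 * k - 2 := by
  classical
  have hN : 0 < n + 2 * k - 2 := by omega
  refine Nat.sInf_le ⟨hN, fun R => ?_⟩
  by_cases hstar : ∃ x, k ≤ Rᶜ.degree x
  · obtain ⟨x, hx⟩ := hstar
    exact .inr (Rᶜ.containsCopy_starGraph_of_le_degree hx)
  push Not at hstar
  have hedges : #G.edgeFinset * (2 * k + 1) ≤ Fintype.card V * (2 * k + 2) := by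
    rw [edgeFinset, ← Set.ncard_eq_toFinset_card', hcard, ← @Nat.cast_le ℚ]
    push_cast
    calc (G.edgeSet.ncard : ℚ) * (2 * k + 1) ≤ n * (1 + 1 / (2 * k + 1)) * (2 * k + 1) := by
          gcongr
      _ = n * (2 * k + 2) := by field_simp; ring
  have : Nonempty (Fin (n + 2 * k - 2)) := ⟨⟨0, hN⟩⟩
  obtain ⟨f, hf⟩ := exists_isCopyOn_of_small_cores (G := G) (R := R) (c := k - 1) 2
    (fun x => by have := hstar x; omega) (by rw [Fintype.card_fin, hcard]; omega)
    (fun s hs => by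
      have := hconn.card_mul_le_of_card_edgeFinset_mul_le hedges hs
      rw [Nat.sub_add_cancel hk, Fintype.card_fin]; omega) univ
  exact .inl hf.containsCopy
end

section
/- Let k ≥ 2 and n ≥ 6k^3, and let G be a connected graph with n vertices, at most n(1 + 1/(24k−12)) edges, and α'(G) = α' ≤ k − 1. Then r(G, K_{1,k}) ≥ n + k − 1 − α' − β, where β = 0 if k divides n + k − 2 − α' and β = 1 otherwise. -/
/-!
Colour `K_N` so that the red graph is complete multipartite with `a` parts of size `k` and `b`
parts of size `c ≤ k`, where `N = a k + b c`. The blue graph is a disjoint union of cliques of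
order at most `k`, so it has no `K_{1,k}`. A red copy of `G` pulls each part back to an
independent set of `G`; for a vertex `v` with `α(G_v) = α'`, the part containing the image of `v`
receives at most `α' + 1` vertices of `G` and every other part at most its size, so
`n ≤ α' + 1 + N - c`. With `c = k - β` and `N = n + k - 2 - α' - β` this fails. For `β = 0`
the parts all have size `k`; for `β = 1` sizes `k` and `k - 1` suffice because `N ≥ (k - 1)²`.
-/

open SimpleGraph Finset

namespace SimpleGraph

variable {V W : Type*}

theorem containsCopy_iff_isContained_s7 (F : SimpleGraph V) (G : SimpleGraph W) :
    F.ContainsCopy G ↔ G ⊑ F :=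
  (isContained_iff_exists_le_comap).symm

theorem starGraph_isContained_iff [Fintype W] [DecidableEq W] (H : SimpleGraph W)
    [DecidableRel H.Adj] (k : ℕ) : _root_.starGraph k ⊑ H ↔ ∃ w, k ≤ H.degree w := by
  constructor
  · rintro ⟨f⟩
    refine ⟨f (.inl 0), ?_⟩
    have hleaves : univ.map (Function.Embedding.inr.trans f.toEmbedding) ⊆
        H.neighborFinset (f (.inl 0)) := by
      intro w hw
      obtain ⟨i, -, rfl⟩ := Finset.mem_map.mp hw
      exact (H.mem_neighborFinset _ _).2 (f.toHom.map_adj (show (_root_.starGraph k).Adj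
        (.inl 0) (.inr i) by simp [_root_.starGraph]))
    simpa using Finset.card_le_card hleaves
  · rintro ⟨z, hz⟩
    obtain ⟨t, hts, htk⟩ := Finset.exists_subset_card_eq (s := H.neighborFinset z) hz
    let e := t.equivFinOfCardEq htk
    have hleaf : ∀ i, H.Adj z (e.symm i) := fun i => by simpa using hts (e.symm i).2
    refine ⟨⟨⟨Sum.elim (fun _ => z) (fun i => e.symm i), ?_⟩, ?_⟩⟩
    · rintro (a | a) (b | b) h <;> simp [_root_.starGraph] at h ⊢
      · exact hleaf b
      · exact (hleaf a).symm
    · rintro (a | a) (b | b) h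
      · exact congrArg _ (Subsingleton.elim a b)
      · exact absurd h (hleaf b).ne
      · exact absurd h.symm (hleaf a).ne
      · simpa using e.symm.injective (Subtype.val_injective h)

theorem exists_isNClique_of_degree_compl_lt [Fintype W] [DecidableEq W] [Nonempty W]
    (R : SimpleGraph W) [DecidableRel R.Adj] {k : ℕ} (hdeg : ∀ w, Rᶜ.degree w < k) (m : ℕ)
    {s : Finset W} (hs : m * k ≤ #s) : ∃ t ⊆ s, R.IsNClique m t := by
  induction m generalizing s with
  | zero => exact ⟨∅, empty_subset s, by simp⟩
  | succ m ih =>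
    have hk : 0 < k := (hdeg (Classical.arbitrary W)).trans_le' (Nat.zero_le _)
    rw [add_one_mul] at hs
    obtain ⟨w, hw⟩ : s.Nonempty := Finset.card_pos.mp (by omega)
    obtain ⟨t, hts, ht⟩ := ih (s := s \ insert w (Rᶜ.neighborFinset w)) (by
      have := Finset.le_card_sdiff (insert w (Rᶜ.neighborFinset w)) s
      have := Finset.card_insert_le w (Rᶜ.neighborFinset w)
      have := hdeg w
      rw [card_neighborFinset_eq_degree] at *
      omega)
    refine ⟨insert w t, Finset.insert_subset hw (hts.trans Finset.sdiff_subset), ht.insert ?_⟩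
    intro b hb
    have hb' := hts hb
    simp only [Finset.mem_sdiff, Finset.mem_insert, mem_neighborFinset, compl_adj] at hb'
    by_contra h
    exact hb'.2 (Or.inr ⟨fun hwb => hb'.2 (Or.inl hwb.symm), h⟩)

end SimpleGraph

theorem ramseyNumber_starGraph_pos {V : Type*} [Fintype V] (G : SimpleGraph V) (k : ℕ) :
    0 < ramseyNumber G (_root_.starGraph k) := by
  classical
  have hmem : Fintype.card V * k + 1 ∈ {N | 0 < N ∧ ∀ R : SimpleGraph (Fin N),
      R.ContainsCopy G ∨ Rᶜ.ContainsCopy (_root_.starGraph k)} := by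
    refine ⟨Nat.succ_pos _, fun R => ?_⟩
    simp only [containsCopy_iff_isContained_s7]
    by_cases hstar : ∃ z, k ≤ Rᶜ.degree z
    · exact .inr ((starGraph_isContained_iff _ k).2 hstar)
    · push Not at hstar
      obtain ⟨t, -, ht⟩ := R.exists_isNClique_of_degree_compl_lt hstar (Fintype.card V)
        (s := univ) (by simp)
      have hG : G ⊑ completeGraph (Fin (Fintype.card V)) :=
        isContained_top_iff.2 ⟨(Fintype.equivFin V).toEmbedding⟩
      exact .inl (hG.trans ((not_cliqueFree_iff_top_isContained _).1 ht.not_cliqueFree))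
  exact (Nat.sInf_mem ⟨_, hmem⟩).1

-- `0 < ramseyNumber G H` rules out the junk value `sInf ∅ = 0`.
theorem card_lt_ramseyNumber {V U W : Type*} [Finite W] {G : SimpleGraph V} {H : SimpleGraph U}
    (hpos : 0 < ramseyNumber G H) (R : SimpleGraph W) (hG : ¬G ⊑ R) (hH : ¬H ⊑ Rᶜ) :
    Nat.card W < ramseyNumber G H := by
  by_contra! hle
  obtain ⟨-, hr⟩ := Nat.sInf_mem (Nat.nonempty_of_pos_sInf hpos)
  let e : Fin (ramseyNumber G H) ↪ W :=
    (Fin.castLEEmb hle).trans (Finite.equivFin W).symm.toEmbedding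
  have hcompl : (R.comap e)ᶜ = Rᶜ.comap e := by
    ext a b
    simp [e.injective.ne_iff]
  rcases hr (R.comap e) with hcopy | hcopy <;> rw [containsCopy_iff_isContained_s7] at hcopy
  · exact hG (hcopy.trans (Embedding.comap e R).isContained)
  · exact hH ((hcompl ▸ hcopy).trans (Embedding.comap e Rᶜ).isContained)

theorem ncard_le_indepNum_of_isIndepSet {V : Type*} [Finite V] {G : SimpleGraph V} {s : Set V}
    (hs : G.IsIndepSet s) : s.ncard ≤ _root_.indepNum G :=
  le_csSup ⟨Nat.card V, by rintro _ ⟨t, -, rfl⟩; exact Set.ncard_le_card t⟩ ⟨s, hs, rfl⟩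

theorem exists_ncard_le_alphaPrime_add_one {V : Type*} [Finite V] [Nonempty V]
    (G : SimpleGraph V) :
    ∃ v, ∀ s : Set V, v ∈ s → G.IsIndepSet s → s.ncard ≤ alphaPrime G + 1 := by
  obtain ⟨v, hv⟩ := Nat.sInf_mem (⟨_, Classical.arbitrary V, rfl⟩ :
    {m | ∃ v : V, m = _root_.indepNum (G.induce (G.delNbhd v))}.Nonempty)
  refine ⟨v, fun s hvs hs => ?_⟩
  let t : Set (G.delNbhd v) := Subtype.val ⁻¹' s
  have ht : (G.induce (G.delNbhd v)).IsIndepSet t :=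
    fun x hx y hy hxy => hs hx hy (Subtype.val_injective.ne hxy)
  have himage : Subtype.val '' t = s \ {v} := by
    ext x
    refine ⟨fun ⟨y, hy, hyx⟩ => hyx ▸ ⟨hy, y.2.1⟩, fun ⟨hxs, hxv⟩ => ?_⟩
    exact ⟨⟨x, hxv, hs hvs hxs (Ne.symm hxv)⟩, hxs, rfl⟩
  calc s.ncard = t.ncard + 1 := by
        rw [← Set.ncard_sdiff_singleton_add_one hvs, ← himage,
          Set.ncard_image_of_injective _ Subtype.val_injective]
    _ ≤ alphaPrime G + 1 := by
        rw [alphaPrime, hv]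
        exact Nat.add_le_add_right (ncard_le_indepNum_of_isIndepSet ht) 1

theorem card_add_le_of_isContained_completeMultipartiteGraph {V ι : Type*} [Finite V]
    {P : ι → Type*} [Finite (Σ i, P i)] {G : SimpleGraph V}
    (hG : G ⊑ completeMultipartiteGraph P) {v : V} {m c : ℕ}
    (hv : ∀ s : Set V, v ∈ s → G.IsIndepSet s → s.ncard ≤ m)
    (hc : ∀ i, c ≤ Nat.card (P i)) :
    Nat.card V + c ≤ m + Nat.card (Σ i, P i) := by
  obtain ⟨f⟩ := hG
  let A : Set V := {u | (f u).1 = (f v).1}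
  let B : Set (Σ i, P i) := Sigma.fst ⁻¹' {(f v).1}
  have hA : A.ncard ≤ m :=
    hv A rfl fun u hu u' hu' _ hadj => f.toHom.map_adj hadj (hu.trans hu'.symm)
  have hB : c ≤ B.ncard := by
    rw [show B = _ from (Set.range_sigmaMk _).symm,
      Set.ncard_range_of_injective sigma_mk_injective]
    exact hc _
  have hAB : Aᶜ.ncard ≤ Bᶜ.ncard :=
    Set.ncard_le_ncard_of_injOn f (fun u hu => hu) f.injective.injOn
  have := Set.ncard_add_ncard_compl A
  have := Set.ncard_add_ncard_compl B
  omega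

theorem not_starGraph_isContained_compl_completeMultipartiteGraph {ι : Type*}
    {P : ι → Type*} [Finite (Σ i, P i)] {k : ℕ} (hk : ∀ i, Nat.card (P i) ≤ k) :
    ¬_root_.starGraph k ⊑ (completeMultipartiteGraph P)ᶜ := by
  rintro ⟨f⟩
  have hpart : Set.range f ⊆ Set.range (Sigma.mk (f (.inl 0)).1) := by
    rw [Set.range_sigmaMk]
    rintro _ ⟨x | j, rfl⟩
    · rw [Subsingleton.elim x 0]; rfl
    · have hadj := f.toHom.map_adj (show (_root_.starGraph k).Adj (.inl 0) (.inr j) by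
        simp [_root_.starGraph])
      simp only [compl_adj, comap_adj, top_adj, not_not] at hadj
      exact hadj.2.symm
  have hf : Function.Injective f := f.injective
  have := Set.ncard_le_ncard hpart
  rw [Set.ncard_range_of_injective hf, Set.ncard_range_of_injective sigma_mk_injective,
    Nat.card_sum, Nat.card_unique, Nat.card_fin] at this
  have := hk (f (.inl 0)).1
  omega

theorem exists_eq_mul_add_mul_sub_one {N k : ℕ} (hk : 0 < k) (hN : (k - 1) * (k - 1) ≤ N) :
    ∃ a b, N = a * k + b * (k - 1) := by
  obtain ⟨j, rfl⟩ := Nat.exists_eq_add_one_of_ne_zero hk.ne'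
  rw [Nat.add_sub_cancel] at hN ⊢
  rcases j.eq_zero_or_pos with rfl | hj
  · exact ⟨N, 0, by simp⟩
  have hmod : N % j ≤ N / j :=
    (Nat.mod_lt N hj).le.trans ((Nat.le_div_iff_mul_le hj).2 hN)
  obtain ⟨e, he⟩ := Nat.exists_eq_add_of_le hmod
  refine ⟨N % j, e, ?_⟩
  calc N = j * (N / j) + N % j := (Nat.div_add_mod N j).symm
    _ = N % j * (j + 1) + e * j := by rw [he]; ring

theorem lt_ramseyNumber_starGraph_of_parts {V : Type*} [Fintype V] {G : SimpleGraph V} {v : V}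
    {m a b c k : ℕ} (hv : ∀ s : Set V, v ∈ s → G.IsIndepSet s → s.ncard ≤ m)
    (hck : c ≤ k) (hN : m + (a * k + b * c) < Fintype.card V + c) :
    a * k + b * c < ramseyNumber G (_root_.starGraph k) := by
  let s : Fin a ⊕ Fin b → ℕ := Sum.elim (fun _ => k) (fun _ => c)
  let P i := Fin (s i)
  have hcard : Nat.card (Σ i, P i) = a * k + b * c := by
    simp [P, s, Fintype.sum_sum_type]
  have hsize : ∀ i, c ≤ Nat.card (P i) ∧ Nat.card (P i) ≤ k := by
    rintro (i | i) <;> simp [P, s, hck]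
  rw [← hcard]
  refine card_lt_ramseyNumber (ramseyNumber_starGraph_pos G k) _ (fun hG => ?_)
    (not_starGraph_isContained_compl_completeMultipartiteGraph fun i => (hsize i).2)
  have := card_add_le_of_isContained_completeMultipartiteGraph hG hv fun i => (hsize i).1
  rw [hcard, Nat.card_eq_fintype_card] at this
  omega

theorem stmt7_general {V : Type*} [Fintype V] (G : SimpleGraph V) (n k : ℕ) (hk : 2 ≤ k)
    (hn : 6 * k ^ 3 ≤ n) (hcard : Fintype.card V = n)
    (hα : alphaPrime G ≤ k - 1) :
    n + k - 1 - alphaPrime G -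
        (if k ∣ (n + k - 2 - alphaPrime G) then 0 else 1) ≤
      ramseyNumber G (_root_.starGraph k) := by
  subst hcard
  have hkk : k + (k - 1) * (k - 1) ≤ Fintype.card V := by
    have := Nat.mul_le_mul (Nat.sub_le k 1) (Nat.sub_le k 1)
    nlinarith
  have : Nonempty V := Fintype.card_pos_iff.mp (by omega)
  obtain ⟨v, hv⟩ := exists_ncard_le_alphaPrime_add_one G
  obtain ⟨a, b, c, hck, hN, hbound⟩ : ∃ a b c, c ≤ k ∧
      alphaPrime G + 1 + (a * k + b * c) < Fintype.card V + c ∧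
      Fintype.card V + k - 1 - alphaPrime G -
          (if k ∣ (Fintype.card V + k - 2 - alphaPrime G) then 0 else 1) =
        a * k + b * c + 1 := by
    split_ifs with hdvd
    · obtain ⟨a, ha⟩ := hdvd
      rw [mul_comm] at ha
      exact ⟨a, 0, k, le_rfl, by omega, by omega⟩
    · obtain ⟨a, b, hab⟩ := exists_eq_mul_add_mul_sub_one
        (N := Fintype.card V + k - 3 - alphaPrime G) (k := k) (by omega) (by omega)
      exact ⟨a, b, k - 1, Nat.sub_le k 1, by omega, by omega⟩
  rw [hbound, Nat.add_one_le_iff]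
  exact lt_ramseyNumber_starGraph_of_parts hv hck hN

/-- lower bound of the main theorem:
`r(G, K_{1,k}) ≥ n + k - 1 - α' - β`, with `β = 0` if `k ∣ n + k - 2 - α'`, else `β = 1`. -/
theorem stmt7 {V : Type*} [Fintype V] (G : SimpleGraph V) (n k : ℕ) (hk : 2 ≤ k)
    (hn : 6 * k ^ 3 ≤ n) (hcard : Fintype.card V = n) (hconn : G.Connected)
    (he : (G.edgeSet.ncard : ℚ) ≤ (n : ℚ) * (1 + 1 / (24 * (k : ℚ) - 12)))
    (hα : alphaPrime G ≤ k - 1) :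
    n + k - 1 - alphaPrime G -
        (if k ∣ (n + k - 2 - alphaPrime G) then 0 else 1) ≤
      ramseyNumber G (_root_.starGraph k) :=
  stmt7_general G n k hk hn hcard hα
end
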